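/- arXiv:1504.04236 — 3 statements merged into one kernel-verified Lean document; each statement's English description precedes it below -/
import Mathlib

section
/- Let L be a split regular Hom-Leibniz algebra with symmetric root system Λ. If the annihilator Z(L) = {x ∈ L : [x,L] + [L,x] = 0} is zero and [L,L] = L, then L is the direct sum of the ideals associated to the connection classes: L = ⊕_{[α]∈Λ/~} I_{[α]}. -/
open Submodule

/-- A split regular Hom-Leibniz algebra: a vector space `L` over `K` with a bilinear
product, an algebra automorphism `φ` satisfying the Hom-Leibniz identity, together with
a distinguished abelian subalgebra `H` (with `φ|_H` given as `φH`). -/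
structure SplitRegularHomLeibniz (K L : Type*) [Field K] [AddCommGroup L] [Module K L] where
  bracket : L →ₗ[K] L →ₗ[K] L
  φ : L ≃ₗ[K] L
  leibniz : ∀ x y z : L, bracket (bracket y z) (φ x)
      = bracket (bracket y x) (φ z) + bracket (φ y) (bracket z x)
  φ_bracket : ∀ x y : L, φ (bracket x y) = bracket (φ x) (φ y)
  H : Submodule K L
  H_abelian : ∀ x ∈ H, ∀ y ∈ H, bracket x y = 0
  φH : H ≃ₗ[K] H
  φH_spec : ∀ h : H, (φH h : L) = φ h

namespace SplitRegularHomLeibniz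

variable {K L : Type*} [Field K] [AddCommGroup L] [Module K L]
variable (A : SplitRegularHomLeibniz K L)

/-- The root space associated to a linear functional `α : H → K`. -/
def rootSpace (α : Module.Dual K A.H) : Submodule K L where
  carrier := {v | ∀ h : A.H, A.bracket v h = α h • A.φ v}
  add_mem' := by
    intro a b ha hb h
    simp [map_add, ha h, hb h, smul_add]
  zero_mem' := by intro h; simp
  smul_mem' := by
    intro c a ha h
    simp only [map_smul, LinearMap.smul_apply, ha h]
    rw [smul_comm]

/-- The set of nonzero roots. -/
def roots : Set (Module.Dual K A.H) := {α | α ≠ 0 ∧ A.rootSpace α ≠ ⊥}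

/-- The splitting condition : `L = H ⊕ (⊕_{α ∈ Λ} L_α)`. -/
def IsSplit : Prop :=
  (A.H ⊔ ⨆ α ∈ A.roots, A.rootSpace α) = ⊤ ∧
  iSupIndep
    (fun i : Option A.roots => Option.elim i A.H (fun α => A.rootSpace α.1))

/-- `H` is a maximal abelian subalgebra. -/
def MaximalAbelian : Prop := ∀ H' : Submodule K L,
  (∀ x ∈ H', ∀ y ∈ H', A.bracket x y = 0) → H'.map A.φ.toLinearMap = H' →
    A.H ≤ H' → H' = A.H

/-- The map `α ↦ α ∘ φ⁻¹` on linear functionals on `H`. -/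
def twist (α : Module.Dual K A.H) : Module.Dual K A.H :=
  α.comp A.φH.symm.toLinearMap

/-- The map `α ↦ α ∘ φ^{-z}` for `z : ℤ`. -/
def ztwist (z : ℤ) (α : Module.Dual K A.H) : Module.Dual K A.H :=
  α.comp ((A.φH ^ (-z)).toLinearMap)

/-- Twisted partial sums of a chain of roots:
`s 0 = f 0`, `s (i+1) = (s i)∘φ⁻¹ + (f (i+1))∘φ⁻¹`. -/
def chainSums (f : ℕ → Module.Dual K A.H) : ℕ → Module.Dual K A.H
  | 0 => f 0
  | i + 1 => A.twist (chainSums f i + f (i + 1))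

/-- `α` is connected to `β`. -/
def Connected (α β : Module.Dual K A.H) : Prop :=
  ∃ (k : ℕ) (f : ℕ → Module.Dual K A.H),
    (∀ i ≤ k, f i ∈ A.roots) ∧
    (∃ n : ℕ, f 0 = A.twist^[n] α) ∧
    (∀ i < k, A.chainSums f i ∈ A.roots) ∧
    (∃ m : ℕ, A.chainSums f k = A.twist^[m] β ∨ A.chainSums f k = -(A.twist^[m] β))

/-- Symmetric root system. -/
def SymmetricRoots : Prop := ∀ α ∈ A.roots, -α ∈ A.roots

/-- `[L_α, L_{-α}]` as a submodule (its span). -/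
def bracketSpan (α : Module.Dual K A.H) : Submodule K L :=
  Submodule.span K
    (Set.image2 (fun x y => A.bracket x y) (A.rootSpace α : Set L) (A.rootSpace (-α) : Set L))

/-- The connection class of `α`. -/
def cls (α : Module.Dual K A.H) : Set (Module.Dual K A.H) :=
  {β | β ∈ A.roots ∧ A.Connected α β}

def I0 (α : Module.Dual K A.H) : Submodule K L := ⨆ β ∈ A.cls α, A.bracketSpan β

def Vcls (α : Module.Dual K A.H) : Submodule K L := ⨆ β ∈ A.cls α, A.rootSpace β

/-- The ideal associated to the connection class of `α`. -/
def Icls (α : Module.Dual K A.H) : Submodule K L := A.I0 α ⊔ A.Vcls α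

/-- Ideals of a Hom-Leibniz algebra. -/
def IsIdeal (I : Submodule K L) : Prop :=
  (∀ x ∈ I, ∀ y : L, A.bracket x y ∈ I ∧ A.bracket y x ∈ I) ∧
    I.map A.φ.toLinearMap = I

/-- The ideal `J` generated by the squares `[x,x]`. -/
def J : Submodule K L :=
  sInf {I : Submodule K L | A.IsIdeal I ∧ ∀ x : L, A.bracket x x ∈ I}

/-- The annihilator `Z(L)`. -/
def annihilator : Set L :=
  {x | ∀ y : L, A.bracket x y = 0 ∧ A.bracket y x = 0}


/-- The candidate ideal attached to a set of roots. -/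
def IOfClass (S : Set (Module.Dual K A.H)) : Submodule K L :=
  (⨆ β ∈ S, A.bracketSpan β) ⊔ (⨆ β ∈ S, A.rootSpace β)

/-- Maximal length: every root space is one-dimensional. -/
def MaximalLength : Prop := ∀ α ∈ A.roots, Module.finrank K (A.rootSpace α) = 1

/-- `L = [L,L]`. -/
def BracketGenerates : Prop :=
  Submodule.span K {z : L | ∃ x y : L, z = A.bracket x y} = ⊤

/-- The roots `α` with `L_α ⊆ J`. -/
def rootsJ : Set (Module.Dual K A.H) := {α ∈ A.roots | A.rootSpace α ≤ A.J}

/-- The roots `α` with `L_α ∩ J = 0`. -/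
def rootsNotJ : Set (Module.Dual K A.H) := {α ∈ A.roots | A.rootSpace α ⊓ A.J = ⊥}

/-- Root-multiplicativity for split regular Hom-Leibniz algebras of maximal length. -/
def RootMultiplicative : Prop :=
  (∀ α ∈ A.rootsNotJ, ∀ β ∈ A.rootsNotJ, A.twist α + A.twist β ∈ A.roots →
    ∃ x ∈ A.rootSpace α, ∃ y ∈ A.rootSpace β, A.bracket x y ≠ 0) ∧
  (∀ α ∈ A.rootsNotJ, ∀ γ ∈ A.rootsJ, A.twist α + A.twist γ ∈ A.rootsJ →
    ∃ x ∈ A.rootSpace α, ∃ y ∈ A.rootSpace γ, A.bracket x y ≠ 0)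

/-- `α` is `¬J`-connected to `β` (both in `Λ^γ`, given by the set `S`):
there is a chain whose elements beyond the first lie in `Λ^{¬J}` and whose twisted
partial sums lie in `Λ^γ`. -/
def NotJConnected (S : Set (Module.Dual K A.H)) (α β : Module.Dual K A.H) : Prop :=
  ∃ (k : ℕ) (f : ℕ → Module.Dual K A.H),
    (∀ i, 1 ≤ i → i ≤ k → f i ∈ A.rootsNotJ) ∧
    (∃ n : ℕ, f 0 = A.twist^[n] α) ∧
    (∀ i ≤ k, A.chainSums f i ∈ S) ∧
    (∃ m : ℕ, A.chainSums f k = A.twist^[m] β ∨ A.chainSums f k = -(A.twist^[m] β))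

/-- Triviality of the Lie-annihilator `Z_Lie(L)`. -/
def LieAnnZero : Prop := ∀ x : L,
  (∀ y ∈ A.H ⊔ ⨆ α ∈ A.rootsNotJ, A.rootSpace α,
    A.bracket x y = 0 ∧ A.bracket y x = 0) → x = 0

end SplitRegularHomLeibniz


namespace SplitRegularHomLeibniz

variable {K L : Type*} [Field K] [AddCommGroup L] [Module K L]
variable (A : SplitRegularHomLeibniz K L)

lemma twist_add (α β : Module.Dual K A.H) : A.twist (α + β) = A.twist α + A.twist β :=
  LinearMap.add_comp _ _ _

lemma twist_neg (α : Module.Dual K A.H) : A.twist (-α) = -A.twist α :=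
  LinearMap.neg_comp _ _

lemma twist_zero : A.twist 0 = 0 := LinearMap.zero_comp _

/-- inverse of twist -/
def untwist (α : Module.Dual K A.H) : Module.Dual K A.H :=
  α.comp A.φH.toLinearMap

lemma twist_untwist (α : Module.Dual K A.H) : A.twist (A.untwist α) = α := by
  ext h; simp [twist, untwist]

lemma untwist_twist (α : Module.Dual K A.H) : A.untwist (A.twist α) = α := by
  ext h; simp [twist, untwist]

lemma twist_eq_zero_iff (α : Module.Dual K A.H) : A.twist α = 0 ↔ α = 0 := by
  constructor
  · intro h
    have := congrArg A.untwist h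
    rwa [untwist_twist, untwist, LinearMap.zero_comp] at this
  · rintro rfl; exact A.twist_zero

lemma twistIter_add (n : ℕ) (α β : Module.Dual K A.H) :
    A.twist^[n] (α + β) = A.twist^[n] α + A.twist^[n] β := by
  induction n generalizing α β with
  | zero => rfl
  | succ n ih => simp [Function.iterate_succ_apply, A.twist_add, ih]

lemma twistIter_neg (n : ℕ) (α : Module.Dual K A.H) :
    A.twist^[n] (-α) = -A.twist^[n] α := by
  induction n generalizing α with
  | zero => rfl
  | succ n ih => simp [Function.iterate_succ_apply, A.twist_neg, ih]

lemma twistIter_eq_zero_iff (n : ℕ) (α : Module.Dual K A.H) :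
    A.twist^[n] α = 0 ↔ α = 0 := by
  induction n generalizing α with
  | zero => exact Iff.rfl
  | succ n ih => rw [Function.iterate_succ_apply, ih, twist_eq_zero_iff]

lemma mem_rootSpace_iff {α : Module.Dual K A.H} {v : L} :
    v ∈ A.rootSpace α ↔ ∀ h : A.H, A.bracket v h = α h • A.φ v := Iff.rfl

lemma H_le_rootSpace_zero : A.H ≤ A.rootSpace (0 : Module.Dual K A.H) := by
  intro h hh
  intro h'
  simp [A.H_abelian h hh h' h'.2]

lemma φ_mem_H {h : L} (hh : h ∈ A.H) : A.φ h ∈ A.H := by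
  have := A.φH_spec ⟨h, hh⟩
  rw [← this]; exact (A.φH ⟨h, hh⟩).2

/-- φ maps root spaces to twisted root spaces -/
lemma coe_φH_symm (h : A.H) : ((A.φH.symm h : A.H) : L) = A.φ.symm (h : L) := by
  apply A.φ.injective
  rw [LinearEquiv.apply_symm_apply, ← A.φH_spec (A.φH.symm h), LinearEquiv.apply_symm_apply]

lemma φ_rootSpace {α : Module.Dual K A.H} {v : L} (hv : v ∈ A.rootSpace α) :
    A.φ v ∈ A.rootSpace (A.twist α) := by
  intro h
  set h0 : A.H := A.φH.symm h with hh0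
  have hh : (h : L) = A.φ (h0 : L) := by
    rw [hh0, A.coe_φH_symm, LinearEquiv.apply_symm_apply]
  have htw : A.twist α h = α h0 := rfl
  calc A.bracket (A.φ v) h = A.bracket (A.φ v) (A.φ (h0 : L)) := by rw [← hh]
    _ = A.φ (A.bracket v h0) := (A.φ_bracket v h0).symm
    _ = A.φ (α h0 • A.φ v) := by rw [hv h0]
    _ = α h0 • A.φ (A.φ v) := by rw [map_smul]
    _ = A.twist α h • A.φ (A.φ v) := by rw [htw]

lemma φ_symm_rootSpace {α : Module.Dual K A.H} {v : L} (hv : v ∈ A.rootSpace α) :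
    A.φ.symm v ∈ A.rootSpace (A.untwist α) := by
  intro h
  have hkey : A.φH h = ⟨A.φ (h : L), A.φ_mem_H h.2⟩ := Subtype.ext (A.φH_spec h)
  apply A.φ.injective
  rw [A.φ_bracket, map_smul, LinearEquiv.apply_symm_apply]
  have := hv (A.φH h)
  rw [hkey] at this
  rw [this]
  rw [← hkey]
  rfl

/-- The key bracket relation between root spaces -/
lemma bracket_rootSpace {α β : Module.Dual K A.H} {v w : L}
    (hv : v ∈ A.rootSpace α) (hw : w ∈ A.rootSpace β) :
    A.bracket v w ∈ A.rootSpace (A.twist α + A.twist β) := by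
  intro h
  set h0 : A.H := A.φH.symm h with hh0
  have hh : (h : L) = A.φ (h0 : L) := by
    rw [← A.φH_spec h0]; simp [hh0]
  have lei := A.leibniz h0 v w
  rw [hv h0, hw h0, map_smul, map_smul, LinearMap.smul_apply, ← A.φ_bracket v w] at lei
  have : A.bracket (A.bracket v w) (A.φ (h0:L)) =
      (α h0 + β h0) • A.φ (A.bracket v w) := by
    rw [lei, add_smul]
  rw [hh, this]
  have : (A.twist α + A.twist β) h = α h0 + β h0 := rfl
  rw [this]

lemma rootSpace_bot_of_not_root {ρ : Module.Dual K A.H} (h1 : ρ ≠ 0)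
    (h2 : ρ ∉ A.roots) : A.rootSpace ρ = ⊥ := by
  by_contra h
  exact h2 ⟨h1, h⟩

lemma twist_roots {α : Module.Dual K A.H} (hα : α ∈ A.roots) : A.twist α ∈ A.roots := by
  refine ⟨fun h => hα.1 ?_, fun h => hα.2 ?_⟩
  · rwa [twist_eq_zero_iff] at h
  · rw [Submodule.eq_bot_iff] at h ⊢
    intro v hv
    have := h (A.φ v) (A.φ_rootSpace hv)
    simpa using this

lemma untwist_roots {α : Module.Dual K A.H} (hα : α ∈ A.roots) : A.untwist α ∈ A.roots := by
  constructor
  · intro h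
    have := congrArg A.twist h
    rw [twist_untwist, twist_zero] at this
    exact hα.1 this
  · intro h
    rw [Submodule.eq_bot_iff] at h
    apply hα.2
    rw [Submodule.eq_bot_iff]
    intro v hv
    have := h (A.φ.symm v) (A.φ_symm_rootSpace hv)
    simpa using this

lemma twistIter_roots {α : Module.Dual K A.H} (hα : α ∈ A.roots) (n : ℕ) :
    A.twist^[n] α ∈ A.roots := by
  induction n with
  | zero => exact hα
  | succ n ih => rw [Function.iterate_succ_apply']; exact A.twist_roots ih

end SplitRegularHomLeibniz
namespace SplitRegularHomLeibniz

variable {K L : Type*} [Field K] [AddCommGroup L] [Module K L]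
variable (A : SplitRegularHomLeibniz K L)

lemma chainSums_zero (f : ℕ → Module.Dual K A.H) : A.chainSums f 0 = f 0 := rfl

lemma chainSums_succ (f : ℕ → Module.Dual K A.H) (i : ℕ) :
    A.chainSums f (i + 1) = A.twist (A.chainSums f i + f (i + 1)) := rfl

lemma chainSums_congr {f g : ℕ → Module.Dual K A.H} {i : ℕ}
    (h : ∀ j ≤ i, f j = g j) : A.chainSums f i = A.chainSums g i := by
  induction i with
  | zero => exact h 0 le_rfl
  | succ i ih =>
    rw [chainSums_succ, chainSums_succ, ih (fun j hj => h j (hj.trans i.le_succ)),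
      h (i+1) le_rfl]

lemma chainSums_twistIter (n : ℕ) (f : ℕ → Module.Dual K A.H) (i : ℕ) :
    A.chainSums (fun j => A.twist^[n] (f j)) i = A.twist^[n] (A.chainSums f i) := by
  induction i with
  | zero => rfl
  | succ i ih =>
    rw [chainSums_succ, chainSums_succ, ih, ← A.twistIter_add n,
      ← Function.iterate_succ_apply' A.twist n, ← Function.iterate_succ_apply A.twist n]

lemma chainSums_neg (f : ℕ → Module.Dual K A.H) (i : ℕ) :
    A.chainSums (fun j => -(f j)) i = -A.chainSums f i := by
  induction i with
  | zero => rfl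
  | succ i ih => rw [chainSums_succ, chainSums_succ, ih, ← neg_add, A.twist_neg]

lemma connected_refl {α : Module.Dual K A.H} (hα : α ∈ A.roots) : A.Connected α α :=
  ⟨0, fun _ => α, fun _ _ => hα, ⟨0, rfl⟩, fun i hi => absurd hi (Nat.not_lt_zero i),
    ⟨0, Or.inl rfl⟩⟩

lemma connected_neg_right {α β : Module.Dual K A.H} (h : A.Connected α β) :
    A.Connected α (-β) := by
  obtain ⟨k, f, hroots, hstart, hsums, m, hend⟩ := h
  exact ⟨k, f, hroots, hstart, hsums, m, by
    rcases hend with h | h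
    · right; rw [h, A.twistIter_neg, neg_neg]
    · left; rw [h, A.twistIter_neg]⟩

lemma connected_neg_right_iff {α β : Module.Dual K A.H} :
    A.Connected α (-β) ↔ A.Connected α β := by
  constructor
  · intro h; have := A.connected_neg_right h; rwa [neg_neg] at this
  · exact A.connected_neg_right

lemma chainSums_twist (f : ℕ → Module.Dual K A.H) (i : ℕ) :
    A.chainSums (fun j => A.twist (f j)) i = A.twist (A.chainSums f i) := by
  induction i with
  | zero => rfl
  | succ i ih => rw [chainSums_succ, chainSums_succ, ih, ← A.twist_add]

lemma connected_twist_left {α β : Module.Dual K A.H} (h : A.Connected α β) :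
    A.Connected (A.twist α) β := by
  obtain ⟨k, f, hroots, ⟨n, hstart⟩, hsums, m, hend⟩ := h
  refine ⟨k, fun j => A.twist (f j), fun i hi => A.twist_roots (hroots i hi),
    ⟨n, ?_⟩, fun i hi => ?_, m + 1, ?_⟩
  · show A.twist (f 0) = _
    rw [hstart, ← Function.iterate_succ_apply' A.twist n α,
      Function.iterate_succ_apply A.twist n α]
  · rw [A.chainSums_twist]; exact A.twist_roots (hsums i hi)
  · rw [A.chainSums_twist]
    rcases hend with h | h
    · left; rw [h, ← Function.iterate_succ_apply' A.twist m β]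
    · right; rw [h, A.twist_neg, ← Function.iterate_succ_apply' A.twist m β]

lemma connected_twist_right {α β : Module.Dual K A.H} (h : A.Connected α β) :
    A.Connected α (A.twist β) := by
  obtain ⟨k, f, hroots, ⟨n, hstart⟩, hsums, m, hend⟩ := h
  refine ⟨k, fun j => A.twist (f j), fun i hi => A.twist_roots (hroots i hi),
    ⟨n + 1, ?_⟩, fun i hi => ?_, m, ?_⟩
  · show A.twist (f 0) = _
    rw [hstart, ← Function.iterate_succ_apply' A.twist n α]
  · rw [A.chainSums_twist]; exact A.twist_roots (hsums i hi)
  · rw [A.chainSums_twist]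
    rcases hend with h | h
    · left; rw [h, ← Function.iterate_succ_apply' A.twist m β,
        Function.iterate_succ_apply A.twist m β]
    · right; rw [h, A.twist_neg, ← Function.iterate_succ_apply' A.twist m β,
        Function.iterate_succ_apply A.twist m β]

lemma connected_of_twist_left {α β : Module.Dual K A.H} (h : A.Connected (A.twist α) β) :
    A.Connected α β := by
  obtain ⟨k, f, hroots, ⟨n, hstart⟩, hsums, hend⟩ := h
  exact ⟨k, f, hroots, ⟨n + 1, by rw [hstart, Function.iterate_add_apply,
    Function.iterate_one]⟩, hsums, hend⟩

lemma connected_neg_left (hsym : A.SymmetricRoots) {α β : Module.Dual K A.H}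
    (h : A.Connected α β) : A.Connected (-α) β := by
  obtain ⟨k, f, hroots, ⟨n, hstart⟩, hsums, m, hend⟩ := h
  refine ⟨k, fun j => -(f j), fun i hi => hsym _ (hroots i hi),
    ⟨n, by show -(f 0) = _; rw [hstart, A.twistIter_neg]⟩, fun i hi => ?_, m, ?_⟩
  · rw [A.chainSums_neg]; exact hsym _ (hsums i hi)
  · rw [A.chainSums_neg]
    rcases hend with h | h
    · right; rw [h]
    · left; rw [h, neg_neg]

lemma connected_neg_left_iff (hsym : A.SymmetricRoots) {α β : Module.Dual K A.H} :
    A.Connected (-α) β ↔ A.Connected α β := by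
  constructor
  · intro h; have := A.connected_neg_left hsym h; rwa [neg_neg] at this
  · exact A.connected_neg_left hsym

/-- self-connections -/
lemma connected_self_twist {α : Module.Dual K A.H} (hα : α ∈ A.roots) :
    A.Connected α (A.twist α) := A.connected_twist_right (A.connected_refl hα)

lemma connected_self_neg {α : Module.Dual K A.H} (hα : α ∈ A.roots) :
    A.Connected α (-α) := A.connected_neg_right (A.connected_refl hα)

/-- If `twist (α + β)` is a root, then in fact `α` is connected to `twist (α+β)`. -/
lemma connected_to_sum {α β : Module.Dual K A.H} (hα : α ∈ A.roots) (hβ : β ∈ A.roots)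
    (hs : A.twist (α + β) ∈ A.roots) : A.Connected α (A.twist (α + β)) := by
  refine ⟨1, fun j => if j = 0 then α else β, ?_, ⟨0, by simp⟩, ?_, 0, Or.inl ?_⟩
  · intro i _
    by_cases h : i = 0 <;> simp [h, hα, hβ]
  · intro i hi
    interval_cases i
    simpa [chainSums_zero] using hα
  · rw [chainSums_succ, chainSums_zero]
    simp

/-- If `twist (α + β)` is a root then `α` and `β` are connected. -/
lemma connected_of_root_sum (hsym : A.SymmetricRoots) {α β : Module.Dual K A.H}
    (hα : α ∈ A.roots) (hβ : β ∈ A.roots)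
    (hs : A.twist (α + β) ∈ A.roots) : A.Connected α β := by
  refine ⟨2, fun j => if j = 0 then α else if j = 1 then β else -(A.twist α), ?_,
    ⟨0, by simp⟩, ?_, 2, Or.inl ?_⟩
  · intro i _
    rcases i with _ | _ | i
    · simpa using hα
    · simpa using hβ
    · simpa using hsym _ (A.twist_roots hα)
  · intro i hi
    interval_cases i
    · simpa [chainSums_zero] using hα
    · rw [chainSums_succ, chainSums_zero]
      norm_num
      exact hs
  · rw [chainSums_succ, chainSums_succ, chainSums_zero]
    norm_num
    rw [A.twist_add α β]
    have h2 : A.twist α + A.twist β + -A.twist α = A.twist β := by abel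
    rw [h2]

end SplitRegularHomLeibniz
namespace SplitRegularHomLeibniz

variable {K L : Type*} [Field K] [AddCommGroup L] [Module K L]
variable (A : SplitRegularHomLeibniz K L)

/-- Core of symmetry: a chain can be reversed. -/
lemma connected_symm_aux (hsym : A.SymmetricRoots) {α β : Module.Dual K A.H}
    (hβ : β ∈ A.roots) (k : ℕ) (f : ℕ → Module.Dual K A.H)
    (hroots : ∀ i ≤ k, f i ∈ A.roots) (n : ℕ) (hstart : f 0 = A.twist^[n] α)
    (hsums : ∀ i < k, A.chainSums f i ∈ A.roots) (m : ℕ)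
    (hend : A.chainSums f k = A.twist^[m] β) : A.Connected β α := by
  set g : ℕ → Module.Dual K A.H := fun j =>
    if j = 0 then A.chainSums f k else -(A.twist^[2*(j-1)+1] (f (k - (j-1)))) with hg
  have hgsums : ∀ j ≤ k, A.chainSums g j = A.twist^[2*j] (A.chainSums f (k - j)) := by
    intro j hj
    induction j with
    | zero => simp [chainSums_zero, hg]
    | succ j ih =>
      have hj' : j ≤ k := by omega
      have hgj : g (j+1) = -(A.twist^[2*j+1] (f (k - j))) := by
        rw [hg]; simp
      rw [chainSums_succ, ih hj', hgj]
      have hk : k - j = (k - (j+1)) + 1 := by omega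
      have hsplitsum : A.chainSums f (k - j)
          = A.twist (A.chainSums f (k - (j+1)) + f (k - j)) := by
        rw [hk, chainSums_succ, ← hk]
      rw [hsplitsum, ← Function.iterate_succ_apply A.twist (2*j), A.twistIter_add,
        add_neg_cancel_right, ← Function.iterate_succ_apply' A.twist (2*j+1)]
      congr 1
  refine ⟨k, g, ?_, ⟨m, by rw [hg]; simp [hend]⟩, ?_, 2*k + n, Or.inl ?_⟩
  · intro i hi
    rcases Nat.eq_zero_or_pos i with rfl | hpos
    · rw [hg]; simp only [if_pos rfl]
      rw [hend]; exact A.twistIter_roots hβ m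
    · have : g i = -(A.twist^[2*(i-1)+1] (f (k - (i-1)))) := by
        rw [hg]; simp [Nat.pos_iff_ne_zero.mp hpos]
      rw [this]
      apply hsym
      apply A.twistIter_roots
      exact hroots _ (by omega)
  · intro i hi
    rw [hgsums i hi.le]
    apply A.twistIter_roots
    rcases Nat.eq_zero_or_pos i with rfl | hpos
    · rw [Nat.sub_zero, hend]; exact A.twistIter_roots hβ m
    · exact hsums _ (by omega)
  · rw [hgsums k le_rfl, Nat.sub_self, chainSums_zero, hstart,
      ← Function.iterate_add_apply]

lemma connected_symm (hsym : A.SymmetricRoots) {α β : Module.Dual K A.H}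
    (hβ : β ∈ A.roots) (h : A.Connected α β) : A.Connected β α := by
  obtain ⟨k, f, hroots, ⟨n, hstart⟩, hsums, m, hend⟩ := h
  rcases hend with hend | hend
  · exact A.connected_symm_aux hsym hβ k f hroots n hstart hsums m hend
  · have h' : A.Connected β (-α) := by
      refine A.connected_symm_aux hsym hβ k (fun j => -(f j))
        (fun i hi => hsym _ (hroots i hi)) n ?_ (fun i hi => ?_) m ?_
      · show -(f 0) = _; rw [hstart, A.twistIter_neg]
      · rw [A.chainSums_neg]; exact hsym _ (hsums i hi)
      · rw [A.chainSums_neg, hend, neg_neg]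
    have := A.connected_neg_right h'
    rwa [neg_neg] at this
  
/-- Core of transitivity, with exact (sign-free) matching endpoint. -/
lemma connected_trans_core {α β γ : Module.Dual K A.H} (hβ : β ∈ A.roots)
    (k1 : ℕ) (f1 : ℕ → Module.Dual K A.H)
    (hroots1 : ∀ i ≤ k1, f1 i ∈ A.roots) (n1 : ℕ) (hstart1 : f1 0 = A.twist^[n1] α)
    (hsums1 : ∀ i < k1, A.chainSums f1 i ∈ A.roots) (m1 : ℕ)
    (hend1 : A.chainSums f1 k1 = A.twist^[m1] β)
    (h2 : A.Connected β γ) : A.Connected α γ := by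
  obtain ⟨k2, f2, hroots2, ⟨n2, hstart2⟩, hsums2, m2, hend2⟩ := h2
  -- twist chain1 by n2, chain2 by m1
  set F1 : ℕ → Module.Dual K A.H := fun i => A.twist^[n2] (f1 i) with hF1
  set F2 : ℕ → Module.Dual K A.H := fun i => A.twist^[m1] (f2 i) with hF2
  set F : ℕ → Module.Dual K A.H := fun i => if i ≤ k1 then F1 i else F2 (i - k1) with hF
  have hF1app : ∀ i, F1 i = A.twist^[n2] (f1 i) := fun _ => rfl
  have hF2app : ∀ i, F2 i = A.twist^[m1] (f2 i) := fun _ => rfl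
  have hFagree : ∀ i ≤ k1, F i = F1 i := fun i hi => if_pos hi
  have hFnot : ∀ i, ¬ i ≤ k1 → F i = F2 (i - k1) := fun i hi => if_neg hi
  have hsumsF1 : ∀ i ≤ k1, A.chainSums F i = A.twist^[n2] (A.chainSums f1 i) := by
    intro i hi
    rw [A.chainSums_congr (fun j hj => hFagree j (hj.trans hi)), hF1,
      A.chainSums_twistIter]
  have hmatch : A.chainSums F k1 = F2 0 := by
    rw [hsumsF1 k1 le_rfl, hend1, hF2app, hstart2, ← Function.iterate_add_apply,
      ← Function.iterate_add_apply, Nat.add_comm n2 m1]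
  have hsumsF2 : ∀ j ≤ k2, A.chainSums F (k1 + j) = A.twist^[m1] (A.chainSums f2 j) := by
    intro j hj
    induction j with
    | zero => rw [Nat.add_zero, hmatch, hF2app, chainSums_zero]
    | succ j ih =>
      have hj' : j ≤ k2 := by omega
      have : k1 + (j + 1) = (k1 + j) + 1 := by omega
      rw [this, chainSums_succ, ih hj']
      have hFval : F (k1 + j + 1) = F2 (k1 + j + 1 - k1) := if_neg (by omega)
      have hidx : k1 + j + 1 - k1 = j + 1 := by omega
      rw [hidx] at hFval
      rw [hFval, hF2app, ← A.twistIter_add, ← Function.iterate_succ_apply' A.twist m1,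
        chainSums_succ, ← Function.iterate_succ_apply A.twist m1]
  refine ⟨k1 + k2, F, ?_, ⟨n1 + n2, ?_⟩, ?_, m1 + m2, ?_⟩
  · intro i hi
    by_cases hik : i ≤ k1
    · rw [hFagree i hik, hF1app]
      exact A.twistIter_roots (hroots1 i hik) n2
    · rw [hFnot i hik, hF2app]
      exact A.twistIter_roots (hroots2 _ (by omega)) m1
  · rw [hFagree 0 (Nat.zero_le _), hF1app, hstart1, ← Function.iterate_add_apply,
      Nat.add_comm n2 n1]
  · intro i hi
    by_cases hik : i ≤ k1
    · rcases lt_or_eq_of_le hik with hik' | rfl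
      · rw [hsumsF1 i hik]
        exact A.twistIter_roots (hsums1 i hik') n2
      · rw [hmatch, hF2app, hstart2, ← Function.iterate_add_apply]
        exact A.twistIter_roots hβ (m1 + n2)
    · have : i = k1 + (i - k1) := by omega
      rw [this, hsumsF2 _ (by omega)]
      exact A.twistIter_roots (hsums2 _ (by omega)) m1
  · rw [hsumsF2 k2 le_rfl]
    rcases hend2 with h | h
    · left; rw [h, ← Function.iterate_add_apply]
    · right; rw [h, A.twistIter_neg, ← Function.iterate_add_apply]

lemma connected_trans (hsym : A.SymmetricRoots) {α β γ : Module.Dual K A.H}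
    (hβ : β ∈ A.roots) (h1 : A.Connected α β) (h2 : A.Connected β γ) :
    A.Connected α γ := by
  obtain ⟨k1, f1, hroots1, ⟨n1, hstart1⟩, hsums1, m1, hend1⟩ := h1
  rcases hend1 with hend1 | hend1
  · exact A.connected_trans_core hβ k1 f1 hroots1 n1 hstart1 hsums1 m1 hend1 h2
  · have h2' : A.Connected (-β) γ := A.connected_neg_left hsym h2
    refine A.connected_trans_core (hsym _ hβ) k1 f1 hroots1 n1 hstart1 hsums1 m1 ?_ h2'
    rw [hend1, A.twistIter_neg]

end SplitRegularHomLeibniz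
namespace SplitRegularHomLeibniz

variable {K L : Type*} [Field K] [AddCommGroup L] [Module K L]
variable (A : SplitRegularHomLeibniz K L)

lemma mem_cls_self {α : Module.Dual K A.H} (hα : α ∈ A.roots) : α ∈ A.cls α :=
  ⟨hα, A.connected_refl hα⟩

lemma cls_eq_of_mem (hsym : A.SymmetricRoots) {α β δ : Module.Dual K A.H}
    (hα : α ∈ A.roots) (hβ : β ∈ A.roots) (h1 : δ ∈ A.cls α) (h2 : δ ∈ A.cls β) :
    A.cls α = A.cls β := by
  obtain ⟨hδ, hαδ⟩ := h1
  obtain ⟨_, hβδ⟩ := h2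
  have hδα : A.Connected δ α := A.connected_symm hsym hδ hαδ
  have hδβ : A.Connected δ β := A.connected_symm hsym hδ hβδ
  have hab : A.Connected α β := A.connected_trans hsym hδ hαδ hδβ
  have hba : A.Connected β α := A.connected_trans hsym hδ hβδ hδα
  ext ρ
  constructor
  · rintro ⟨hρ, h⟩
    exact ⟨hρ, A.connected_trans hsym hα hba h⟩
  · rintro ⟨hρ, h⟩
    exact ⟨hρ, A.connected_trans hsym hβ hab h⟩

/-- extraction of components from an independent family -/
lemma indep_sum_eq_zero {ι : Type*} (p : ι → Submodule K L) (hp : iSupIndep p)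
    (s : Finset ι) (x : ι → L) (hx : ∀ i ∈ s, x i ∈ p i)
    (h0 : ∑ i ∈ s, x i = 0) : ∀ i ∈ s, x i = 0 := by
  classical
  intro i0 hi0
  have hxi0 : x i0 = -∑ i ∈ s.erase i0, x i := by
    rw [← Finset.add_sum_erase s x hi0] at h0
    exact eq_neg_of_add_eq_zero_left h0
  have hmem2 : x i0 ∈ ⨆ j ≠ i0, p j := by
    rw [hxi0]
    apply Submodule.neg_mem
    apply Submodule.sum_mem
    intro i hi
    have hne : i ≠ i0 := Finset.ne_of_mem_erase hi
    exact Submodule.mem_iSup_of_mem i (Submodule.mem_iSup_of_mem hne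
      (hx i (Finset.mem_of_mem_erase hi)))
  exact Submodule.disjoint_def.mp (hp i0) (x i0) (hx i0 hi0) hmem2

/-- the root spaces indexed by roots form an independent family -/
lemma rootSpaces_indep (hsplit : A.IsSplit) :
    iSupIndep (fun α : A.roots => A.rootSpace α.1) :=
  hsplit.2.comp (Option.some_injective _)

/-- The zero root space is exactly `H`. -/
lemma rootSpace_zero_eq_H (hsplit : A.IsSplit) :
    A.rootSpace (0 : Module.Dual K A.H) = A.H := by
  refine le_antisymm ?_ A.H_le_rootSpace_zero
  intro v hv
  have hv' : v ∈ A.H ⊔ ⨆ α ∈ A.roots, A.rootSpace α := hsplit.1 ▸ Submodule.mem_top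
  obtain ⟨h, hh, w, hw, rfl⟩ := Submodule.mem_sup.mp hv'
  rw [iSup_subtype'] at hw
  obtain ⟨f, hf, hfsum⟩ := (Submodule.mem_iSup_iff_exists_finsupp _ _).mp hw
  suffices hw0 : w = 0 by simpa [hw0] using hh
  -- w ∈ rootSpace 0
  have hw0 : ∀ h' : A.H, A.bracket w h' = 0 := by
    intro h'
    have h1 : A.bracket (h + w) h' = 0 := by
      have := hv h'
      simpa using this
    have h2 : A.bracket h h' = 0 := A.H_abelian h hh h' h'.2
    have h3 := map_add A.bracket h w
    calc A.bracket w h' = A.bracket (h + w) h' - A.bracket h h' := by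
          rw [h3]; simp
      _ = 0 := by rw [h1, h2, sub_zero]
  -- twisted independence
  have htwist_inj : Function.Injective
      (fun α : A.roots => (⟨A.twist α.1, A.twist_roots α.2⟩ : A.roots)) := by
    intro a b hab
    apply Subtype.ext
    have : A.twist a.1 = A.twist b.1 := congrArg Subtype.val hab
    have := congrArg A.untwist this
    rwa [untwist_twist, untwist_twist] at this
  have hindT : iSupIndep (fun α : A.roots => A.rootSpace (A.twist α.1)) :=
    (A.rootSpaces_indep hsplit).comp htwist_inj
  -- each component vanishes
  have hcomp : ∀ α ∈ f.support, f α = 0 := by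
    intro α hα
    by_contra hne
    have hkey : ∀ h' : A.H, α.1 h' • A.φ (f α) = 0 := by
      intro h'
      have hsum : ∑ β ∈ f.support, (β.1 h' • A.φ (f β)) = 0 := by
        have : A.bracket w h' = ∑ β ∈ f.support, A.bracket (f β) h' := by
          rw [← hfsum, Finsupp.sum, map_sum, LinearMap.coe_sum, Finset.sum_apply]
        rw [hw0 h'] at this
        calc ∑ β ∈ f.support, (β.1 h' • A.φ (f β))
            = ∑ β ∈ f.support, A.bracket (f β) h' :=
              Finset.sum_congr rfl (fun β _ => (hf β h').symm)
          _ = 0 := this.symm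
      exact indep_sum_eq_zero _ hindT f.support
        (fun β => β.1 h' • A.φ (f β))
        (fun β _ => Submodule.smul_mem _ _ (A.φ_rootSpace (hf β)))
        hsum α hα
    have hφ : A.φ (f α) ≠ 0 := fun h => hne (by simpa using A.φ.injective (h.trans (map_zero A.φ).symm))
    have hα0 : α.1 = 0 := by
      ext h'
      have := hkey h'
      rcases smul_eq_zero.mp this with h | h
      · exact h
      · exact absurd h hφ
    exact α.2.1 hα0
  have : w = 0 := by
    rw [← hfsum, Finsupp.sum]
    exact Finset.sum_eq_zero fun i hi => hcomp i hi
  exact this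

lemma bracketSpan_le_H (hsplit : A.IsSplit) (α : Module.Dual K A.H) :
    A.bracketSpan α ≤ A.H := by
  rw [← A.rootSpace_zero_eq_H hsplit]
  rw [bracketSpan, Submodule.span_le]
  rintro z ⟨x, hx, y, hy, rfl⟩
  have := A.bracket_rootSpace hx hy
  rwa [A.twist_neg, add_neg_cancel] at this

end SplitRegularHomLeibniz
namespace SplitRegularHomLeibniz

variable {K L : Type*} [Field K] [AddCommGroup L] [Module K L]
variable (A : SplitRegularHomLeibniz K L)

lemma rootSpace_le_Icls {α β : Module.Dual K A.H} (hβ : β ∈ A.cls α) :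
    A.rootSpace β ≤ A.Icls α :=
  le_trans (le_iSup₂ (f := fun β (_ : β ∈ A.cls α) => A.rootSpace β) β hβ) le_sup_right

lemma bracketSpan_le_Icls {α β : Module.Dual K A.H} (hβ : β ∈ A.cls α) :
    A.bracketSpan β ≤ A.Icls α :=
  le_trans (le_iSup₂ (f := fun β (_ : β ∈ A.cls α) => A.bracketSpan β) β hβ) le_sup_left

lemma Icls_le_sup {α : Module.Dual K A.H} (hα : α ∈ A.roots) :
    A.Icls α ≤ ⨆ β ∈ A.roots, A.Icls β :=
  le_iSup₂ (f := fun β (_ : β ∈ A.roots) => A.Icls β) α hα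

lemma inner_bracket_mem (hsplit : A.IsSplit) {μ ν : Module.Dual K A.H}
    (hμ : μ = 0 ∨ μ ∈ A.roots) (hν : ν = 0 ∨ ν ∈ A.roots)
    {x y : L} (hx : x ∈ A.rootSpace μ) (hy : y ∈ A.rootSpace ν) :
    A.bracket x y ∈ ⨆ β ∈ A.roots, A.Icls β := by
  set S := ⨆ β ∈ A.roots, A.Icls β with hS
  rcases hμ with rfl | hμ
  · rcases hν with rfl | hν
    · -- both zero : bracket vanishes
      rw [A.rootSpace_zero_eq_H hsplit] at hx hy
      rw [A.H_abelian x hx y hy]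
      exact Submodule.zero_mem S
    · -- μ = 0, ν a root : lands in rootSpace (twist ν)
      have hmem := A.bracket_rootSpace hx hy
      rw [A.twist_zero, zero_add] at hmem
      have hcls : A.twist ν ∈ A.cls ν := ⟨A.twist_roots hν, A.connected_self_twist hν⟩
      exact A.Icls_le_sup hν (A.rootSpace_le_Icls hcls hmem)
  · by_cases hνμ : ν = -μ
    · -- bracket lands in the bracketSpan
      subst hνμ
      have : A.bracket x y ∈ A.bracketSpan μ :=
        Submodule.subset_span (Set.mem_image2_of_mem hx hy)
      exact A.Icls_le_sup hμ (A.bracketSpan_le_Icls (A.mem_cls_self hμ) this)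
    · rcases hν with rfl | hν
      · -- ν = 0, μ a root
        have hmem := A.bracket_rootSpace hx hy
        rw [A.twist_zero, add_zero] at hmem
        have hcls : A.twist μ ∈ A.cls μ := ⟨A.twist_roots hμ, A.connected_self_twist hμ⟩
        exact A.Icls_le_sup hμ (A.rootSpace_le_Icls hcls hmem)
      · -- both roots, ν ≠ -μ
        have hmem := A.bracket_rootSpace hx hy
        rw [← A.twist_add] at hmem
        have hne : A.twist (μ + ν) ≠ 0 := by
          rw [Ne, A.twist_eq_zero_iff]
          intro h
          apply hνμ
          have : ν = (μ + ν) - μ := by abel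
          rw [this, h]; abel
        by_cases hρ : A.twist (μ + ν) ∈ A.roots
        · have hcls : A.twist (μ + ν) ∈ A.cls μ := ⟨hρ, A.connected_to_sum hμ hν hρ⟩
          exact A.Icls_le_sup hμ (A.rootSpace_le_Icls hcls hmem)
        · rw [A.rootSpace_bot_of_not_root hne hρ, Submodule.mem_bot] at hmem
          rw [hmem]
          exact Submodule.zero_mem S

lemma sup_Icls_eq_top (hsplit : A.IsSplit) (hLL : A.BracketGenerates) :
    (⨆ β ∈ A.roots, A.Icls β) = ⊤ := by
  set S := ⨆ β ∈ A.roots, A.Icls β with hS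
  have hbig : (⨆ μ ∈ insert (0 : Module.Dual K A.H) A.roots, A.rootSpace μ) = ⊤ := by
    rw [iSup_insert, A.rootSpace_zero_eq_H hsplit, hsplit.1]
  have step1 : ∀ μ ∈ insert (0 : Module.Dual K A.H) A.roots,
      ∀ x ∈ A.rootSpace μ, ∀ y : L, A.bracket x y ∈ S := by
    intro μ hμ x hx y
    have hle : (⨆ ν ∈ insert (0 : Module.Dual K A.H) A.roots, A.rootSpace ν)
        ≤ Submodule.comap (A.bracket x) S := by
      refine iSup_le fun ν => iSup_le fun hν => ?_
      intro y' hy'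
      exact A.inner_bracket_mem hsplit
        (by simpa using hμ) (by simpa using hν) hx hy'
    exact hle (hbig ▸ Submodule.mem_top) 
  have step2 : ∀ x y : L, A.bracket x y ∈ S := by
    intro x y
    have hle : (⨆ μ ∈ insert (0 : Module.Dual K A.H) A.roots, A.rootSpace μ)
        ≤ Submodule.comap ((A.bracket).flip y) S := by
      refine iSup_le fun μ => iSup_le fun hμ => ?_
      intro x' hx'
      exact step1 μ hμ x' hx' y
    exact hle (hbig ▸ Submodule.mem_top)
  refine le_antisymm le_top ?_
  rw [← hLL]
  rw [Submodule.span_le]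
  rintro z ⟨x, y, rfl⟩
  exact step2 x y

end SplitRegularHomLeibniz
namespace SplitRegularHomLeibniz

variable {K L : Type*} [Field K] [AddCommGroup L] [Module K L]
variable (A : SplitRegularHomLeibniz K L)

lemma connected_self_neg_twist {δ : Module.Dual K A.H} (hδ : δ ∈ A.roots) :
    A.Connected δ (-(A.twist δ)) :=
  A.connected_neg_right (A.connected_self_twist hδ)

/-- a nonzero element of a root space makes it a root (if the functional is nonzero) -/
lemma root_of_nonzero {ρ : Module.Dual K A.H} {z : L} (hz : z ∈ A.rootSpace ρ)
    (hzne : z ≠ 0) (hρ : ρ ≠ 0) : ρ ∈ A.roots := by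
  refine ⟨hρ, fun h => hzne ?_⟩
  rw [Submodule.eq_bot_iff] at h
  exact h z hz

/-- non-connection kills `[L_γ, L_δ]` -/
lemma bracket_rootSpace_rootSpace_eq_zero (hsym : A.SymmetricRoots)
    {γ δ : Module.Dual K A.H} (hγ : γ ∈ A.roots) (hδ : δ ∈ A.roots)
    (hnc : ¬ A.Connected δ γ) {v w : L} (hv : v ∈ A.rootSpace γ) (hw : w ∈ A.rootSpace δ) :
    A.bracket v w = 0 := by
  by_contra hne
  have hmem := A.bracket_rootSpace hv hw
  rw [← A.twist_add] at hmem
  by_cases h0 : γ + δ = 0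
  · have hδγ : δ = -γ := by rw [← neg_eq_of_add_eq_zero_right h0]
    apply hnc
    rw [hδγ]
    exact A.connected_neg_left hsym (A.connected_refl hγ)
  · have hρ : A.twist (γ + δ) ∈ A.roots :=
      A.root_of_nonzero hmem hne (fun h => h0 ((A.twist_eq_zero_iff _).mp h))
    apply hnc
    have : A.twist (δ + γ) ∈ A.roots := by rwa [add_comm δ γ]
    exact A.connected_of_root_sum hsym hδ hγ this

/-- non-connection kills `[L_γ, [L_δ, L_{-δ}]]` -/
lemma bracket_rootSpace_brk_eq_zero (hsym : A.SymmetricRoots)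
    {γ δ : Module.Dual K A.H} (hγ : γ ∈ A.roots) (hδ : δ ∈ A.roots)
    (hnc : ¬ A.Connected δ γ) {v e f : L} (hv : v ∈ A.rootSpace γ)
    (he : e ∈ A.rootSpace δ) (hf : f ∈ A.rootSpace (-δ)) :
    A.bracket v (A.bracket e f) = 0 := by
  have hE : A.φ e ∈ A.rootSpace (A.twist δ) := A.φ_rootSpace he
  have hF : A.φ f ∈ A.rootSpace (-(A.twist δ)) := by
    have := A.φ_rootSpace hf
    rwa [A.twist_neg] at this
  have h1 : A.bracket v (A.φ e) = 0 := by
    by_contra hne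
    have hmem := A.bracket_rootSpace hv hE
    rw [← A.twist_add] at hmem
    by_cases h0 : γ + A.twist δ = 0
    · apply hnc
      have hγ' : γ = -(A.twist δ) := by rw [← neg_eq_of_add_eq_zero_left h0]
      rw [hγ']
      exact A.connected_self_neg_twist hδ
    · have hρ : A.twist (γ + A.twist δ) ∈ A.roots :=
        A.root_of_nonzero hmem hne (fun h => h0 ((A.twist_eq_zero_iff _).mp h))
      apply hnc
      apply A.connected_of_twist_left
      have : A.twist (A.twist δ + γ) ∈ A.roots := by rwa [add_comm]
      exact A.connected_of_root_sum hsym (A.twist_roots hδ) hγ this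
  have h2 : A.bracket v (A.φ f) = 0 := by
    by_contra hne
    have hmem := A.bracket_rootSpace hv hF
    rw [A.twist_neg, ← A.twist_neg (A.twist δ), ← A.twist_add] at hmem
    by_cases h0 : γ + -(A.twist δ) = 0
    · apply hnc
      have hγ' : γ = A.twist δ := by
        have := neg_eq_of_add_eq_zero_left h0
        rw [neg_neg] at this
        rw [← this]
      rw [hγ']
      exact A.connected_self_twist hδ
    · have hρ : A.twist (γ + -(A.twist δ)) ∈ A.roots :=
        A.root_of_nonzero hmem hne (fun h => h0 ((A.twist_eq_zero_iff _).mp h))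
      apply hnc
      apply A.connected_of_twist_left
      apply (A.connected_neg_left_iff hsym).mp
      have : A.twist (-(A.twist δ) + γ) ∈ A.roots := by rwa [add_comm]
      exact A.connected_of_root_sum hsym (hsym _ (A.twist_roots hδ)) hγ this
  have key : A.bracket (A.φ v) (A.bracket (A.φ e) (A.φ f)) = 0 := by
    have lei := A.leibniz (A.φ f) v (A.φ e)
    rw [h1, h2] at lei
    simpa using lei.symm
  rw [← A.φ_bracket, ← A.φ_bracket] at key
  apply A.φ.injective
  rw [key, map_zero]

/-- non-connection kills `[[L_δ, L_{-δ}], L_γ]` -/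
lemma bracket_brk_rootSpace_eq_zero (hsym : A.SymmetricRoots)
    {γ δ : Module.Dual K A.H} (hγ : γ ∈ A.roots) (hδ : δ ∈ A.roots)
    (hnc : ¬ A.Connected δ γ) {v e f : L} (hv : v ∈ A.rootSpace γ)
    (he : e ∈ A.rootSpace δ) (hf : f ∈ A.rootSpace (-δ)) :
    A.bracket (A.bracket e f) v = 0 := by
  have hv' : A.φ.symm v ∈ A.rootSpace (A.untwist γ) := A.φ_symm_rootSpace hv
  have h1 : A.bracket e (A.φ.symm v) = 0 := by
    by_contra hne
    have hmem := A.bracket_rootSpace he hv'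
    rw [← A.twist_add] at hmem
    by_cases h0 : δ + A.untwist γ = 0
    · apply hnc
      have h1' : A.untwist γ = -δ := by
        have h := neg_eq_of_add_eq_zero_left h0
        rw [← h, neg_neg]
      have h2' : γ = -(A.twist δ) := by
        rw [← A.twist_untwist γ, h1', A.twist_neg]
      rw [h2']
      exact A.connected_self_neg_twist hδ
    · have hρ : A.twist (δ + A.untwist γ) ∈ A.roots :=
        A.root_of_nonzero hmem hne (fun h => h0 ((A.twist_eq_zero_iff _).mp h))
      apply hnc
      rw [← A.twist_untwist γ]
      apply A.connected_twist_right
      exact A.connected_of_root_sum hsym hδ (A.untwist_roots hγ) hρ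
  have h2 : A.bracket f (A.φ.symm v) = 0 := by
    by_contra hne
    have hmem := A.bracket_rootSpace hf hv'
    rw [← A.twist_add] at hmem
    by_cases h0 : -δ + A.untwist γ = 0
    · apply hnc
      have h1' : A.untwist γ = δ := by
        have h := neg_eq_of_add_eq_zero_right h0
        rw [neg_neg] at h
        exact h.symm
      have h2' : γ = A.twist δ := by rw [← A.twist_untwist γ, h1']
      rw [h2']
      exact A.connected_self_twist hδ
    · have hρ : A.twist (-δ + A.untwist γ) ∈ A.roots :=
        A.root_of_nonzero hmem hne (fun h => h0 ((A.twist_eq_zero_iff _).mp h))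
      apply hnc
      rw [← A.twist_untwist γ]
      apply A.connected_twist_right
      apply (A.connected_neg_left_iff hsym).mp
      exact A.connected_of_root_sum hsym (hsym _ hδ) (A.untwist_roots hγ) hρ
  have lei := A.leibniz (A.φ.symm v) e f
  rw [h1, h2, LinearEquiv.apply_symm_apply] at lei
  simpa using lei

end SplitRegularHomLeibniz
namespace SplitRegularHomLeibniz

variable {K L : Type*} [Field K] [AddCommGroup L] [Module K L]
variable (A : SplitRegularHomLeibniz K L)

lemma not_connected_of_cls_ne (hsym : A.SymmetricRoots) {α β γ' δ' : Module.Dual K A.H}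
    (hα : α ∈ A.roots) (hβ : β ∈ A.roots) (hne : A.cls α ≠ A.cls β)
    (hγ' : γ' ∈ A.cls α) (hδ' : δ' ∈ A.cls β) : ¬ A.Connected δ' γ' := by
  intro hcon
  apply hne
  have hγr : γ' ∈ A.roots := hγ'.1
  have hδr : δ' ∈ A.roots := hδ'.1
  have h1 : γ' ∈ A.cls δ' := ⟨hγr, hcon⟩
  have e1 : A.cls α = A.cls δ' := A.cls_eq_of_mem hsym hα hδr hγ' h1
  have e2 : A.cls β = A.cls δ' := A.cls_eq_of_mem hsym hβ hδr hδ' (A.mem_cls_self hδr)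
  rw [e1, e2]

/-- distinct connection classes annihilate each other -/
lemma vanish_pair (hsym : A.SymmetricRoots) (hsplit : A.IsSplit)
    {α β : Module.Dual K A.H} (hα : α ∈ A.roots) (hβ : β ∈ A.roots)
    (hne : A.cls α ≠ A.cls β) :
    ∀ x ∈ A.IOfClass (A.cls α), ∀ y ∈ A.IOfClass (A.cls β), A.bracket x y = 0 := by
  have hnc : ∀ γ' ∈ A.cls α, ∀ δ' ∈ A.cls β, ¬ A.Connected δ' γ' :=
    fun γ' hγ' δ' hδ' => A.not_connected_of_cls_ne hsym hα hβ hne hγ' hδ'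
  have hnc' : ∀ γ' ∈ A.cls α, ∀ δ' ∈ A.cls β, ¬ A.Connected γ' δ' :=
    fun γ' hγ' δ' hδ' => A.not_connected_of_cls_ne hsym hβ hα (Ne.symm hne) hδ' hγ'
  suffices hW : A.IOfClass (A.cls α) ≤
      ⨅ y : (A.IOfClass (A.cls β)), LinearMap.ker ((A.bracket).flip y.1) by
    intro x hx y hy
    have := Submodule.mem_iInf _ |>.mp (hW hx) ⟨y, hy⟩
    rw [LinearMap.mem_ker] at this
    exact this
  apply sup_le
  · refine iSup₂_le fun γ' hγ' => ?_
    rw [bracketSpan, Submodule.span_le]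
    rintro z ⟨e, he, f, hf, rfl⟩
    rw [SetLike.mem_coe, Submodule.mem_iInf]
    rintro ⟨y, hy⟩
    rw [LinearMap.mem_ker, LinearMap.flip_apply]
    have hin : A.IOfClass (A.cls β) ≤ LinearMap.ker (A.bracket (A.bracket e f)) := by
      apply sup_le
      · refine iSup₂_le fun δ' hδ' => fun y' hy' => ?_
        rw [LinearMap.mem_ker]
        have hef : A.bracket e f ∈ A.H := A.bracketSpan_le_H hsplit γ'
          (Submodule.subset_span (Set.mem_image2_of_mem he hf))
        exact A.H_abelian _ hef y' (A.bracketSpan_le_H hsplit δ' hy')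
      · refine iSup₂_le fun δ' hδ' => fun y' hy' => ?_
        rw [LinearMap.mem_ker]
        exact A.bracket_brk_rootSpace_eq_zero hsym hδ'.1 hγ'.1
          (hnc' γ' hγ' δ' hδ') hy' he hf
    exact LinearMap.mem_ker.mp (hin hy)
  · refine iSup₂_le fun γ' hγ' => fun x hx => ?_
    rw [Submodule.mem_iInf]
    rintro ⟨y, hy⟩
    rw [LinearMap.mem_ker, LinearMap.flip_apply]
    have hin : A.IOfClass (A.cls β) ≤ LinearMap.ker (A.bracket x) := by
      apply sup_le
      · refine iSup₂_le fun δ' hδ' => ?_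
        rw [bracketSpan, Submodule.span_le]
        rintro z ⟨e, he, f, hf, rfl⟩
        rw [SetLike.mem_coe, LinearMap.mem_ker]
        exact A.bracket_rootSpace_brk_eq_zero hsym hγ'.1 hδ'.1
          (hnc γ' hγ' δ' hδ') hx he hf
      · refine iSup₂_le fun δ' hδ' => fun w hw => ?_
        rw [LinearMap.mem_ker]
        exact A.bracket_rootSpace_rootSpace_eq_zero hsym hγ'.1 hδ'.1
          (hnc γ' hγ' δ' hδ') hx hw
    exact LinearMap.mem_ker.mp (hin hy)

end SplitRegularHomLeibniz


open SplitRegularHomLeibniz in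
theorem direct_sum_of_ideals {K L : Type*} [Field K] [AddCommGroup L] [Module K L]
    (A : SplitRegularHomLeibniz K L)
    (hsplit : A.IsSplit) (hmax : A.MaximalAbelian)
    (hsym : A.SymmetricRoots)
    (hZ : ∀ x ∈ A.annihilator, x = 0)
    (hLL : A.BracketGenerates) :
    (⨆ α ∈ A.roots, A.Icls α) = ⊤ ∧
    iSupIndep (fun c : {S : Set (Module.Dual K A.H) // ∃ α ∈ A.roots, S = A.cls α} =>
      A.IOfClass c.1) := by
  refine ⟨A.sup_Icls_eq_top hsplit hLL, ?_⟩
  intro c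
  rw [Submodule.disjoint_def]
  intro x hx1 hx2
  obtain ⟨α, hα, hcval⟩ := c.2
  replace hx1 : x ∈ A.IOfClass (A.cls α) := by rw [← hcval]; exact hx1
  have htop : (⨆ c' : {S : Set (Module.Dual K A.H) // ∃ α ∈ A.roots, S = A.cls α},
      A.IOfClass c'.1) = ⊤ := by
    refine le_antisymm le_top ?_
    rw [← A.sup_Icls_eq_top hsplit hLL]
    refine iSup₂_le fun β hβ => ?_
    exact le_iSup (fun c' : {S : Set (Module.Dual K A.H) // ∃ α ∈ A.roots, S = A.cls α} =>
      A.IOfClass c'.1) ⟨A.cls β, β, hβ, rfl⟩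
  -- x annihilates I_c
  have hle : (⨆ c'' : {S : Set (Module.Dual K A.H) // ∃ α ∈ A.roots, S = A.cls α},
      ⨆ (_ : c'' ≠ c), A.IOfClass c''.1)
      ≤ (⨅ y : (A.IOfClass (A.cls α)), LinearMap.ker ((A.bracket).flip y.1)) ⊓
      (⨅ y : (A.IOfClass (A.cls α)), LinearMap.ker (A.bracket y.1)) := by
    refine iSup_le fun c'' => iSup_le fun hne'' => ?_
    obtain ⟨β'', hβ'', hc''⟩ := c''.2
    have hneq : A.cls β'' ≠ A.cls α := by
      rw [← hc'', ← hcval]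
      exact fun h => hne'' (Subtype.ext (h ▸ rfl))
    intro z hz
    replace hz : z ∈ A.IOfClass (A.cls β'') := by rw [← hc'']; exact hz
    rw [Submodule.mem_inf]
    constructor
    · rw [Submodule.mem_iInf]
      rintro ⟨y, hy⟩
      rw [LinearMap.mem_ker, LinearMap.flip_apply]
      exact A.vanish_pair hsym hsplit hβ'' hα hneq z hz y hy
    · rw [Submodule.mem_iInf]
      rintro ⟨y, hy⟩
      rw [LinearMap.mem_ker]
      exact A.vanish_pair hsym hsplit hα hβ'' (Ne.symm hneq) y hy z hz
  have hxann := hle hx2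
  apply hZ
  intro y
  have hy : y ∈ (⨆ c' : {S : Set (Module.Dual K A.H) // ∃ α ∈ A.roots, S = A.cls α},
      A.IOfClass c'.1) := htop ▸ Submodule.mem_top
  have hZx : (⨆ c' : {S : Set (Module.Dual K A.H) // ∃ α ∈ A.roots, S = A.cls α},
      A.IOfClass c'.1) ≤ LinearMap.ker (A.bracket x) ⊓ LinearMap.ker ((A.bracket).flip x) := by
    refine iSup_le fun c' => ?_
    obtain ⟨β', hβ', hc'⟩ := c'.2
    by_cases hcc : c' = c
    · -- use hxann
      intro w hw
      replace hw : w ∈ A.IOfClass (A.cls α) := by rw [← hcval, ← hcc]; exact hw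
      rw [Submodule.mem_inf]
      constructor
      · rw [LinearMap.mem_ker]
        have := Submodule.mem_iInf _ |>.mp ((Submodule.mem_inf.mp hxann).1) ⟨w, hw⟩
        rw [LinearMap.mem_ker, LinearMap.flip_apply] at this
        exact this
      · rw [LinearMap.mem_ker, LinearMap.flip_apply]
        have := Submodule.mem_iInf _ |>.mp ((Submodule.mem_inf.mp hxann).2) ⟨w, hw⟩
        rw [LinearMap.mem_ker] at this
        exact this
    · -- distinct classes
      have hneq : A.cls α ≠ A.cls β' := by
        rw [← hc', ← hcval]
        exact fun h => hcc (Subtype.ext (h ▸ rfl)).symm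
      intro w hw
      replace hw : w ∈ A.IOfClass (A.cls β') := by rw [← hc']; exact hw
      rw [Submodule.mem_inf]
      constructor
      · rw [LinearMap.mem_ker]
        exact A.vanish_pair hsym hsplit hα hβ' hneq x hx1 w hw
      · rw [LinearMap.mem_ker, LinearMap.flip_apply]
        exact A.vanish_pair hsym hsplit hβ' hα (Ne.symm hneq) w hw x hx1
  have := Submodule.mem_inf.mp (hZx hy)
  rw [LinearMap.mem_ker] at this
  rcases this with ⟨h1, h2⟩
  rw [LinearMap.mem_ker, LinearMap.flip_apply] at h2
  exact ⟨h1, h2⟩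
end

section
/- Let L be a split regular Hom-Leibniz algebra with Z(L) = 0 (trivial annihilator). If I is an ideal of L contained in the maximal abelian subalgebra H, then I = {0}. -/
open Submodule

open SplitRegularHomLeibniz in
theorem ideal_in_H_eq_bot {K L : Type*} [Field K] [AddCommGroup L] [Module K L]
    (A : SplitRegularHomLeibniz K L)
    (hsplit : A.IsSplit) (hmax : A.MaximalAbelian)
    (hZ : ∀ x ∈ A.annihilator, x = 0)
    (I : Submodule K L) (hI : A.IsIdeal I) (hIH : I ≤ A.H) :
    I = ⊥ := by
  -- φ.symm maps H into H
  have hφsymmH : ∀ h ∈ A.H, A.φ.symm h ∈ A.H := by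
    intro h hh
    have hq : A.φ ((A.φH.symm ⟨h, hh⟩ : A.H) : L) = h := by
      rw [← A.φH_spec (A.φH.symm ⟨h, hh⟩)]
      simp
    have : A.φ.symm h = ((A.φH.symm ⟨h, hh⟩ : A.H) : L) :=
      A.φ.symm_apply_eq.mpr hq.symm
    rw [this]
    exact (A.φH.symm ⟨h, hh⟩).2
  -- φ.symm maps I into I
  have hφI : ∀ x ∈ I, A.φ.symm x ∈ I := by
    intro x hx
    have hx' : x ∈ I.map A.φ.toLinearMap := by rw [hI.2]; exact hx
    obtain ⟨z, hz, hzx⟩ := hx'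
    have : A.φ.symm x = z := A.φ.symm_apply_eq.mpr hzx.symm
    rwa [this]
  -- H is disjoint from each root space
  have hdisj : ∀ α ∈ A.roots, Disjoint A.H (A.rootSpace α) := by
    intro α hα
    have h1 := hsplit.2 (Option.none)
    refine h1.mono_right ?_
    exact le_iSup₂_of_le (Option.some ⟨α, hα⟩) (by simp) le_rfl
  rw [eq_bot_iff]
  intro x hx
  have hxH : x ∈ A.H := hIH hx
  -- the set of y annihilated by x on both sides is a submodule
  let S : Submodule K L :=
    { carrier := {y | A.bracket x y = 0 ∧ A.bracket y x = 0}
      add_mem' := by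
        intro a b ha hb
        exact ⟨by simp [map_add, ha.1, hb.1], by simp [map_add, ha.2, hb.2]⟩
      zero_mem' := ⟨by simp, by simp⟩
      smul_mem' := by
        intro c a ha
        exact ⟨by simp [ha.1], by simp [ha.2]⟩ }
  have hHS : A.H ≤ S := fun y hy => ⟨A.H_abelian x hxH y hy, A.H_abelian y hy x hxH⟩
  have hRS : ∀ α ∈ A.roots, A.rootSpace α ≤ S := by
    intro α hα y hy
    have hy' : ∀ h : A.H, A.bracket y h = α h • A.φ y := hy
    constructor
    · -- bracket x y = 0 via Leibniz identity
      set β : Module.Dual K A.H := α.comp A.φH.toLinearMap with hβdef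
      have hβ : β ≠ 0 := by
        intro h0
        apply hα.1
        ext h
        have h1 : β (A.φH.symm h) = 0 := by rw [h0]; rfl
        have h2 : β (A.φH.symm h) = α h := by
          simp [hβdef]
        rw [h2] at h1
        simpa using h1
      obtain ⟨h0, hh0⟩ : ∃ h : A.H, β h ≠ 0 := by
        by_contra hcon
        push_neg at hcon
        exact hβ (LinearMap.ext hcon)
      set u : L := A.φ.symm y with hudef
      have hu : ∀ h : A.H, A.bracket u h = β h • A.φ u := by
        intro h
        apply A.φ.injective
        rw [A.φ_bracket, map_smul]
        have e : A.φ u = y := A.φ.apply_symm_apply y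
        rw [e]
        have h1 : (A.φ (h : L)) = ((A.φH h : A.H) : L) := (A.φH_spec h).symm
        rw [h1, hy' (A.φH h)]
        rfl
      set x' : L := A.φ.symm x with hxdef
      have hx'I : x' ∈ I := hφI x hx
      have hleib := A.leibniz h0 x' u
      have e1 : A.bracket (A.bracket x' u) (A.φ h0) = 0 := by
        refine A.H_abelian _ (hIH ((hI.1 x' hx'I u).1)) _ ?_
        have := (A.φH h0).2
        rwa [A.φH_spec] at this
      have e2 : A.bracket x' (h0 : L) = 0 := A.H_abelian x' (hIH hx'I) h0 h0.2
      have e3 : A.bracket u (h0 : L) = β h0 • y := by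
        rw [hu h0]
        congr 1
        exact A.φ.apply_symm_apply y
      have e4 : A.φ x' = x := A.φ.apply_symm_apply x
      rw [e1, e2, e3, e4, map_zero, LinearMap.zero_apply, map_smul, zero_add] at hleib
      exact (smul_eq_zero.mp hleib.symm).resolve_left hh0
    · -- bracket y x = 0
      have h1 : A.bracket y x = α ⟨x, hxH⟩ • A.φ y := hy' ⟨x, hxH⟩
      by_cases hc : α ⟨x, hxH⟩ = 0
      · simp [h1, hc]
      · have hIy : A.bracket y x ∈ I := (hI.1 x hx y).2
        have hφyH : A.φ y ∈ A.H := by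
          have h2 : A.φ y = (α ⟨x, hxH⟩)⁻¹ • A.bracket y x := by
            rw [h1, smul_smul, inv_mul_cancel₀ hc, one_smul]
          rw [h2]
          exact Submodule.smul_mem _ _ (hIH hIy)
        have hyH : y ∈ A.H := by
          have h3 := hφsymmH _ hφyH
          simpa using h3
        have hy0 : y = 0 := Submodule.disjoint_def.mp (hdisj α hα) y hyH hy
        simp [hy0]
  have hTS : (⊤ : Submodule K L) ≤ S := by
    rw [← hsplit.1]
    exact sup_le hHS (iSup₂_le hRS)
  have hxann : x ∈ A.annihilator := fun y => hTS (Submodule.mem_top (x := y))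
  simpa using hZ x hxann
end

section
/- Let L = H ⊕ (⊕_{α∈Λ} L_α) be a split regular Hom-Leibniz algebra over a field of characteristic 0. If I is an ideal of L, then I decomposes as I = (I ∩ H) ⊕ (⊕_{α∈Λ} (I ∩ L_α)). -/
open Submodule

section Aux

variable {K L : Type*} [Field K] [AddCommGroup L] [Module K L]

open SplitRegularHomLeibniz Finset

private lemma phi_symm_mem (A : SplitRegularHomLeibniz K L) {I : Submodule K L}
    (hI : A.IsIdeal I) {z : L} (hz : z ∈ I) : A.φ.symm z ∈ I := by
  rw [← hI.2] at hz
  obtain ⟨y, hy, hyz⟩ := hz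
  have : A.φ.symm z = y := by
    apply A.φ.injective
    simp only [LinearEquiv.apply_symm_apply]
    exact hyz.symm
  rwa [this]

private lemma key_lemma (A : SplitRegularHomLeibniz K L) {I : Submodule K L}
    (hI : A.IsIdeal I) [DecidableEq (Module.Dual K A.H)]
    (t : Finset (Module.Dual K A.H)) (β : Module.Dual K A.H)
    (hβ0 : β ≠ 0) :
    β ∉ t → ∀ h : L, h ∈ A.H → ∀ v : Module.Dual K A.H → L,
      (∀ α ∈ insert β t, v α ∈ A.rootSpace α) →
      h + ∑ α ∈ insert β t, v α ∈ I → v β ∈ I := by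
  induction t using Finset.induction_on with
  | empty =>
    intro _ h hh v hv hx
    obtain ⟨h₀, hne⟩ := DFunLike.ne_iff.mp hβ0
    rw [LinearMap.zero_apply] at hne
    have hsum : ∑ α ∈ insert β (∅ : Finset (Module.Dual K A.H)), v α = v β := by simp
    rw [hsum] at hx
    have hb : A.bracket (h + v β) ↑h₀ = β h₀ • A.φ (v β) := by
      rw [map_add, LinearMap.add_apply, A.H_abelian h hh ↑h₀ h₀.2,
        hv β (Finset.mem_insert_self _ _) h₀, zero_add]
    have hmem : A.φ.symm (A.bracket (h + v β) ↑h₀) ∈ I :=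
      phi_symm_mem A hI ((hI.1 _ hx ↑h₀).1)
    rw [hb, map_smul, LinearEquiv.symm_apply_apply] at hmem
    have := Submodule.smul_mem I (β h₀)⁻¹ hmem
    rwa [inv_smul_smul₀ hne] at this
  | @insert γ r hγr ih =>
    intro hβt h hh v hv hx
    have hβγ : β ≠ γ := fun e => hβt (e ▸ Finset.mem_insert_self _ _)
    have hβr : β ∉ r := fun e => hβt (Finset.mem_insert_of_mem e)
    have hγni : γ ∉ insert β r := by
      simp only [Finset.mem_insert]
      rintro (e | e)
      · exact hβγ e.symm
      · exact hγr e
    obtain ⟨h₁, hne⟩ := DFunLike.ne_iff.mp (sub_ne_zero.mpr hβγ)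
    rw [LinearMap.zero_apply, LinearMap.sub_apply, sub_ne_zero] at hne
    set u : Finset (Module.Dual K A.H) := insert β (insert γ r) with hu
    set x : L := h + ∑ α ∈ u, v α with hxdef
    have huu : u = insert γ (insert β r) := Finset.insert_comm _ _ _
    have hbr : A.bracket x ↑h₁ = ∑ α ∈ u, α h₁ • A.φ (v α) := by
      rw [hxdef, map_add, map_sum, LinearMap.add_apply, LinearMap.sum_apply,
        A.H_abelian h hh ↑h₁ h₁.2, zero_add]
      exact Finset.sum_congr rfl fun α hα => hv α hα h₁
    have hy : A.φ.symm (A.bracket x ↑h₁) = ∑ α ∈ u, α h₁ • v α := by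
      rw [hbr, map_sum]
      exact Finset.sum_congr rfl fun α _ => by
        rw [map_smul, LinearEquiv.symm_apply_apply]
    have hyI : A.φ.symm (A.bracket x ↑h₁) - γ h₁ • x ∈ I :=
      sub_mem (phi_symm_mem A hI ((hI.1 x hx ↑h₁).1)) (Submodule.smul_mem I _ hx)
    have hsum2 : ∑ α ∈ u, (α h₁ - γ h₁) • v α
        = ∑ α ∈ insert β r, (α h₁ - γ h₁) • v α := by
      rw [huu, Finset.sum_insert hγni, sub_self, zero_smul, zero_add]
    have heq : A.φ.symm (A.bracket x ↑h₁) - γ h₁ • x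
        = (-(γ h₁)) • h + ∑ α ∈ insert β r, (α h₁ - γ h₁) • v α := by
      rw [hy, hxdef, smul_add, Finset.smul_sum, sub_add_eq_sub_sub, sub_right_comm,
        ← Finset.sum_sub_distrib]
      simp only [← sub_smul]
      rw [hsum2, neg_smul]
      abel
    rw [heq] at hyI
    have hw : (β h₁ - γ h₁) • v β ∈ I := by
      refine ih hβr _ (A.H.smul_mem _ hh) (fun α => (α h₁ - γ h₁) • v α) ?_ hyI
      intro α hα
      refine Submodule.smul_mem _ _ (hv α ?_)
      rcases Finset.mem_insert.mp hα with e | e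
      · exact e ▸ Finset.mem_insert_self _ _
      · exact Finset.mem_insert_of_mem (Finset.mem_insert_of_mem e)
    have := Submodule.smul_mem I (β h₁ - γ h₁)⁻¹ hw
    rwa [inv_smul_smul₀ (sub_ne_zero.mpr hne)] at this

end Aux


open SplitRegularHomLeibniz in
theorem ideal_decomposition {K L : Type*} [Field K] [AddCommGroup L] [Module K L]
    (A : SplitRegularHomLeibniz K L)
    (hsplit : A.IsSplit) (hmax : A.MaximalAbelian)
    [CharZero K] (I : Submodule K L) (hI : A.IsIdeal I) :
    I = (I ⊓ A.H) ⊔ ⨆ α ∈ A.roots, (I ⊓ A.rootSpace α) := by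
  classical
  apply le_antisymm
  · intro x hx
    have hx' : x ∈ A.H ⊔ ⨆ α ∈ A.roots, A.rootSpace α := hsplit.1 ▸ Submodule.mem_top
    obtain ⟨h, hh, w, hw, hhw⟩ := Submodule.mem_sup.mp hx'
    rw [iSup_subtype'] at hw
    rw [Submodule.mem_iSup_iff_exists_finsupp] at hw
    obtain ⟨f, hf, hfsum⟩ := hw
    rw [Finsupp.sum] at hfsum
    set s : Finset (Module.Dual K A.H) :=
      f.support.map ⟨Subtype.val, Subtype.val_injective⟩ with hs
    set v : Module.Dual K A.H → L :=
      fun α => if hα : α ∈ A.roots then f ⟨α, hα⟩ else 0 with hvdef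
    have hsroots : ∀ α ∈ s, α ∈ A.roots := by
      intro α hα
      obtain ⟨a, _, rfl⟩ := Finset.mem_map.mp hα
      exact a.2
    have hvroot : ∀ α ∈ s, v α ∈ A.rootSpace α := by
      intro α hα
      simp only [hvdef]
      rw [dif_pos (hsroots α hα)]
      exact hf _
    have hsum : ∑ α ∈ s, v α = w := by
      rw [hs, Finset.sum_map, ← hfsum]
      refine Finset.sum_congr rfl fun a _ => ?_
      simp only [hvdef, Function.Embedding.coeFn_mk]
      rw [dif_pos a.2]
    have hxI : h + ∑ α ∈ s, v α ∈ I := by rw [hsum, hhw]; exact hx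
    have hvI : ∀ β ∈ s, v β ∈ I := by
      intro β hβ
      have hβ0 : β ≠ 0 := (hsroots β hβ).1
      have hse : s = insert β (s.erase β) := (Finset.insert_erase hβ).symm
      refine key_lemma A hI (s.erase β) β hβ0 (Finset.notMem_erase β s) h hh v ?_ ?_
      · rw [← hse]; exact hvroot
      · rw [← hse]; exact hxI
    have hhI : h ∈ I := by
      have he : h = x - ∑ α ∈ s, v α := by rw [hsum, ← hhw]; abel
      rw [he]
      exact sub_mem hx (Submodule.sum_mem I fun α hα => hvI α hα)
    rw [← hhw, ← hsum]
    refine Submodule.add_mem _ ?_ (Submodule.sum_mem _ ?_)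
    · exact Submodule.mem_sup_left (Submodule.mem_inf.mpr ⟨hhI, hh⟩)
    · intro α hα
      apply Submodule.mem_sup_right
      have hle : I ⊓ A.rootSpace α ≤ ⨆ β ∈ A.roots, (I ⊓ A.rootSpace β) :=
        le_biSup (fun β => I ⊓ A.rootSpace β) (hsroots α hα)
      exact hle (Submodule.mem_inf.mpr ⟨hvI α hα, hvroot α hα⟩)
  · apply sup_le
    · exact inf_le_left
    · exact iSup₂_le fun α _ => inf_le_left
end
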